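/- arXiv:2105.09228 — 2 statements merged into one kernel-verified Lean document; each statement's English description precedes it below -/
import Mathlib

section
/- Assume b1 + τ − d1 − C·x̄ₐ > 0 and −(a1 − τ − d1 − C·ȳ) > σ2·p·C·ȳ/(d2 + σ2). Then the 2×2 matrix A = [[a1 − b1 − τ, σ2], [p·(b1 − d1 + τ), −(d2 + σ2)]] has nonzero determinant, and every eigenvalue of A has strictly negative real part. -/
/-!
The matrix is stable as soon as its trace is negative and its determinant positive, since then
both roots of `X² - tr·X + det` lie in the open left half-plane. Clearing the denominator of `x̄ₐ`,
the fitness condition `b1 + τ - d1 - C·x̄ₐ > 0` is exactly `det A > 0`. As the off-diagonal entries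
of `A` have nonnegative product and its lower diagonal entry is negative, `det A > 0` forces the
upper diagonal entry to be negative too, hence `tr A < 0`.
-/

open Polynomial

theorem re_neg_of_sq_sub_mul_add_eq_zero {T D : ℝ} (hT : T < 0) (hD : 0 < D) {z : ℂ}
    (hz : z ^ 2 - T * z + D = 0) : z.re < 0 := by
  have hre := congrArg Complex.re hz
  have him := congrArg Complex.im hz
  simp only [pow_two, Complex.add_re, Complex.sub_re, Complex.mul_re, Complex.ofReal_re,
    Complex.ofReal_im, Complex.add_im, Complex.sub_im, Complex.mul_im, Complex.zero_re,
    Complex.zero_im] at hre him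
  rcases eq_or_ne z.im 0 with hreal | hnonreal
  · rw [hreal] at hre
    nlinarith
  · have hfactor : z.im * (2 * z.re - T) = 0 := by linarith
    have hvertex : 2 * z.re - T = 0 := (mul_eq_zero.mp hfactor).resolve_left hnonreal
    linarith

namespace Matrix

theorem trace_neg_of_det_pos {R : Type*} [CommRing R] [LinearOrder R] [IsStrictOrderedRing R]
    {M : Matrix (Fin 2) (Fin 2) R} (h11 : M 1 1 < 0) (hoff : 0 ≤ M 0 1 * M 1 0)
    (hdet : 0 < M.det) : M.trace < 0 := by
  rw [det_fin_two] at hdet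
  have h00 : M 0 0 < 0 := neg_of_mul_pos_left (by linarith) h11.le
  rw [trace_fin_two]
  linarith

theorem re_neg_of_isRoot_charpoly_map_ofReal {M : Matrix (Fin 2) (Fin 2) ℝ} (htr : M.trace < 0)
    (hdet : 0 < M.det) {z : ℂ} (hz : (M.map Complex.ofReal).charpoly.IsRoot z) : z.re < 0 := by
  have hmap : M.map Complex.ofReal = M.map Complex.ofRealHom := rfl
  rw [hmap, charpoly_map, charpoly_fin_two, IsRoot] at hz
  refine re_neg_of_sq_sub_mul_add_eq_zero htr hdet ?_
  simpa using hz

end Matrix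

def dominatingMatrix (a1 b1 d1 d2 τ σ2 p : ℝ) : Matrix (Fin 2) (Fin 2) ℝ :=
  !![a1 - b1 - τ, σ2; p * (b1 - d1 + τ), -(d2 + σ2)]

theorem dominatingMatrix_det_pos {a1 b1 d1 d2 τ C σ2 p : ℝ} (hden : 0 < d2 + (1 - p) * σ2)
    (hC : C ≠ 0)
    (hfit : 0 < b1 + τ - d1 - C * ((a1 - d1) * (d2 + σ2) / (C * (d2 + (1 - p) * σ2)))) :
    0 < (dominatingMatrix a1 b1 d1 d2 τ σ2 p).det := by
  have hcancel : C * ((a1 - d1) * (d2 + σ2) / (C * (d2 + (1 - p) * σ2)))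
      = (a1 - d1) * (d2 + σ2) / (d2 + (1 - p) * σ2) := by
    field_simp
  rw [hcancel, sub_pos, div_lt_iff₀ hden] at hfit
  rw [dominatingMatrix, Matrix.det_fin_two_of]
  linear_combination hfit

theorem three_dim_dominating_matrix_stable_general
    (a1 b1 d1 d2 τ C σ2 p xabar : ℝ)
    (hb1 : d1 < b1) (hd2 : 0 ≤ d2) (hτ : 0 ≤ τ)
    (hC : 0 < C) (hσ2 : 0 < σ2) (hp0 : 0 < p) (hp1 : p < 1)
    (hxabar : xabar = (a1 - d1) * (d2 + σ2) / (C * (d2 + (1 - p) * σ2)))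
    (hfitY : 0 < b1 + τ - d1 - C * xabar)
    (A : Matrix (Fin 2) (Fin 2) ℝ)
    (hA : A = !![a1 - b1 - τ, σ2; p * (b1 - d1 + τ), -(d2 + σ2)]) :
    A.det ≠ 0 ∧
    (∀ z : ℂ, ((A.map Complex.ofReal).charpoly).IsRoot z → z.re < 0) := by
  subst hA hxabar
  have hdet : 0 < (dominatingMatrix a1 b1 d1 d2 τ σ2 p).det :=
    dominatingMatrix_det_pos (by nlinarith) hC.ne' hfitY
  have hr : 0 < b1 - d1 + τ := by linarith
  have htr : (dominatingMatrix a1 b1 d1 d2 τ σ2 p).trace < 0 :=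
    Matrix.trace_neg_of_det_pos (show -(d2 + σ2) < 0 by linarith)
      (show 0 ≤ σ2 * (p * (b1 - d1 + τ)) by positivity) hdet
  exact ⟨hdet.ne', fun z => Matrix.re_neg_of_isRoot_charpoly_map_ofReal htr hdet⟩

/-- Under the fitness conditions `b1 + τ − d1 − C·x̄ₐ > 0` and
`−(a1 − τ − d1 − C·ȳ) > σ2·p·C·ȳ/(d2+σ2)`, the matrix
`A = [[a1 − b1 − τ, σ2], [p·(b1 − d1 + τ), −(d2+σ2)]]` has nonzero determinant
and all its eigenvalues have strictly negative real part. -/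
theorem three_dim_dominating_matrix_stable
    (a1 b1 d1 d2 τ C σ2 p xabar ybar : ℝ)
    (hd1 : 0 ≤ d1) (ha1 : d1 < a1) (hb1 : d1 < b1) (hd2 : 0 ≤ d2) (hτ : 0 ≤ τ)
    (hC : 0 < C) (hσ2 : 0 < σ2) (hp0 : 0 < p) (hp1 : p < 1)
    (hxabar : xabar = (a1 - d1) * (d2 + σ2) / (C * (d2 + (1 - p) * σ2)))
    (hybar : ybar = (b1 - d1) / C)
    (hfitY : 0 < b1 + τ - d1 - C * xabar)
    (hfitX : σ2 * p * C * ybar / (d2 + σ2) < -(a1 - τ - d1 - C * ybar))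
    (A : Matrix (Fin 2) (Fin 2) ℝ)
    (hA : A = !![a1 - b1 - τ, σ2; p * (b1 - d1 + τ), -(d2 + σ2)]) :
    A.det ≠ 0 ∧
    (∀ z : ℂ, ((A.map Complex.ofReal).charpoly).IsRoot z → z.re < 0) :=
  three_dim_dominating_matrix_stable_general a1 b1 d1 d2 τ C σ2 p xabar hb1 hd2 hτ hC hσ2 hp0 hp1
    hxabar hfitY A hA
end

section
/- Assume b1 − τ − d1 − C·x̄ₐ > 0 and −(a1 + τ − d1 − C·ȳ) > σ2·p·C·ȳ/(d2 + σ2). Then the 2×2 matrix A = [[a1 − b1 + τ, σ2], [p·(b1 − d1), −(d2 + σ2)]] has nonzero determinant, and every eigenvalue of A has strictly negative real part. -/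
/-! A real 2×2 matrix with negative trace and positive determinant is stable: its characteristic
polynomial is `X² - t X + d` with `t < 0 < d`, whose non-real roots have real part `t / 2` and
whose real roots are negative. For the dominating matrix, the second fitness condition, after
substituting `C ȳ = b1 - d1`, reads `σ2 p (b1 - d1) < (b1 - a1 - τ)(d2 + σ2)`, which is exactly
positivity of the determinant and forces `a1 - b1 + τ < 0`, hence a negative trace. -/

theorem Complex.re_neg_of_sq_sub_mul_add_eq_zero {t d : ℝ} (ht : t < 0) (hd : 0 < d) {z : ℂ}
    (hz : z ^ 2 - t * z + d = 0) : z.re < 0 := by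
  have hre : z.re ^ 2 - z.im ^ 2 - t * z.re + d = 0 := by
    simpa [pow_two] using congrArg Complex.re hz
  have him : z.im * (2 * z.re - t) = 0 := by
    have := congrArg Complex.im hz
    simp only [pow_two, sub_im, add_im, mul_im, ofReal_re, ofReal_im, zero_im] at this
    linear_combination this
  rcases mul_eq_zero.1 him with hreal | hmid
  · by_contra! hnonneg
    rw [hreal] at hre
    nlinarith [mul_nonneg hnonneg hnonneg]
  · linarith

theorem Matrix.re_neg_of_isRoot_charpoly_map_ofReal_s17 (A : Matrix (Fin 2) (Fin 2) ℝ)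
    (htr : A.trace < 0) (hdet : 0 < A.det) {z : ℂ}
    (hz : (A.map Complex.ofReal).charpoly.IsRoot z) : z.re < 0 := by
  apply Complex.re_neg_of_sq_sub_mul_add_eq_zero htr hdet
  change (A.map Complex.ofRealHom).charpoly.IsRoot z at hz
  rw [Matrix.charpoly_map, Matrix.charpoly_fin_two] at hz
  simpa [Polynomial.IsRoot] using hz

theorem three_dim_dominating_matrix_stable_reversed_transfer_general
    (a1 b1 d1 d2 τ C σ2 p ybar : ℝ)
    (hb1 : d1 < b1) (hd2 : 0 ≤ d2)
    (hC : 0 < C) (hσ2 : 0 < σ2) (hp0 : 0 < p)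
    (hybar : ybar = (b1 - d1) / C)
    (hfitX : σ2 * p * C * ybar / (d2 + σ2) < -(a1 + τ - d1 - C * ybar))
    (A : Matrix (Fin 2) (Fin 2) ℝ)
    (hA : A = !![a1 - b1 + τ, σ2; p * (b1 - d1), -(d2 + σ2)]) :
    A.det ≠ 0 ∧
    (∀ z : ℂ, ((A.map Complex.ofReal).charpoly).IsRoot z → z.re < 0) := by
  have hCy : C * ybar = b1 - d1 := by rw [hybar]; field_simp
  have hfit : σ2 * p * (b1 - d1) < (b1 - a1 - τ) * (d2 + σ2) := by
    have := (div_lt_iff₀ (by positivity)).1 hfitX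
    linear_combination this + (d2 + σ2 - σ2 * p) * hCy
  have hdet : 0 < A.det := by
    rw [hA, Matrix.det_fin_two_of]
    linarith
  have htr : A.trace < 0 := by
    rw [hA, Matrix.trace_fin_two_of]
    nlinarith [mul_pos (mul_pos hσ2 hp0) (sub_pos.2 hb1)]
  exact ⟨hdet.ne', fun z => A.re_neg_of_isRoot_charpoly_map_ofReal_s17 htr hdet⟩

/-- Under the fitness conditions `b1 − τ − d1 − C·x̄ₐ > 0` and
`−(a1 + τ − d1 − C·ȳ) > σ2·p·C·ȳ/(d2+σ2)`, the matrix
`A = [[a1 − b1 + τ, σ2], [p·(b1 − d1), −(d2+σ2)]]` has nonzero determinant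
and all its eigenvalues have strictly negative real part. -/
theorem three_dim_dominating_matrix_stable_reversed_transfer
    (a1 b1 d1 d2 τ C σ2 p xabar ybar : ℝ)
    (hd1 : 0 ≤ d1) (ha1 : d1 < a1) (hb1 : d1 < b1) (hd2 : 0 ≤ d2) (hτ : 0 ≤ τ)
    (hC : 0 < C) (hσ2 : 0 < σ2) (hp0 : 0 < p) (hp1 : p < 1)
    (hxabar : xabar = (a1 - d1) * (d2 + σ2) / (C * (d2 + (1 - p) * σ2)))
    (hybar : ybar = (b1 - d1) / C)
    (hfitY : 0 < b1 - τ - d1 - C * xabar)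
    (hfitX : σ2 * p * C * ybar / (d2 + σ2) < -(a1 + τ - d1 - C * ybar))
    (A : Matrix (Fin 2) (Fin 2) ℝ)
    (hA : A = !![a1 - b1 + τ, σ2; p * (b1 - d1), -(d2 + σ2)]) :
    A.det ≠ 0 ∧
    (∀ z : ℂ, ((A.map Complex.ofReal).charpoly).IsRoot z → z.re < 0) :=
  three_dim_dominating_matrix_stable_reversed_transfer_general a1 b1 d1 d2 τ C σ2 p ybar hb1 hd2 hC
    hσ2 hp0 hybar hfitX A hA
end
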